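/- Let Σ be a dagger signature whose dagger involution on morphism labels is fixed-point-free (f† ≠ f for all f), and let F and G be simple closed dot-diagrams over Σ. Let ℤ[X ∪ X̄] be the polynomial ring with variables X_b and X̄_b for each box b ∈ B^F, and let ⟦−⟧_F be the dagger interpretation of Σ over ℤ[X ∪ X̄] defined by ⟦A⟧_F := ℓ_d^{-1}(A) ⊆ D^F and ⟦f⟧_F := Σ_{b ∈ ℓ_b^{-1}(f)} f_b + Σ_{b ∈ ℓ_b^{-1}(f†)} (f_b)†, where f_b is the tensor with entry X_b at the wiring position of box b and 0 elsewhere, and (f_b)† is its transpose with X_b replaced by X̄_b. Then the coefficient of the monomial ∏_{b ∈ B^F} X_b in ⟦G⟧_F ∈ ℤ[X ∪ X̄] equals the number of dot-diagram homomorphisms (ψ, φ) : G → F whose box function ψ : B^G → B^F is a bijection. -/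

import Mathlib

open scoped Classical

/-- A monoidal signature: object labels and morphism labels with domain/codomain arities. -/
structure Signature where
  Obj : Type
  Mor : Type
  dom : Mor → List Obj
  cod : Mor → List Obj

/-- A dot-diagram over a signature `σ`: finite sets of boxes and dots, lists of diagram
inputs and outputs, labelling functions, and wiring functions sending each box input/output
and each diagram input/output to a dot, subject to the typing conditions. -/
structure DotDiagram (σ : Signature) where
  B : Type
  D : Type
  fB : Fintype B
  fD : Fintype D
  dB : DecidableEq B
  dD : DecidableEq D
  lb : B → σ.Mor
  ld : D → σ.Obj
  nIn : ℕ
  nOut : ℕ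
  win : (b : B) → Fin (σ.dom (lb b)).length → D
  wout : (b : B) → Fin (σ.cod (lb b)).length → D
  pin : Fin nIn → D
  pout : Fin nOut → D
  tyIn : ∀ b i, ld (win b i) = (σ.dom (lb b)).get i
  tyOut : ∀ b j, ld (wout b j) = (σ.cod (lb b)).get j

attribute [instance] DotDiagram.fB DotDiagram.fD DotDiagram.dB DotDiagram.dD

namespace DotDiagram

variable {σ : Signature}

/-- A dot-diagram is closed when it has no diagram inputs or outputs. -/
def Closed (F : DotDiagram σ) : Prop := F.nIn = 0 ∧ F.nOut = 0

/-- A dot-diagram is simple when both wiring functions (on the disjoint union of box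
ports and diagram ports) are surjective onto the dots. -/
def Simple (F : DotDiagram σ) : Prop :=
  (∀ d : F.D, (∃ b i, F.win b i = d) ∨ (∃ k, F.pin k = d)) ∧
  (∀ d : F.D, (∃ b j, F.wout b j = d) ∨ (∃ k, F.pout k = d))

/-- A homomorphism of dot-diagrams: a pair of functions on boxes and dots respecting
the labellings, the wiring functions, and the connections to diagram inputs/outputs. -/
structure Hom (F G : DotDiagram σ) where
  onB : F.B → G.B
  onD : F.D → G.D
  map_lb : ∀ b, G.lb (onB b) = F.lb b
  map_ld : ∀ d, G.ld (onD d) = F.ld d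
  map_win : ∀ (b : F.B) (i : Fin (σ.dom (F.lb b)).length),
    G.win (onB b) (Fin.cast (by rw [map_lb b]) i) = onD (F.win b i)
  map_wout : ∀ (b : F.B) (j : Fin (σ.cod (F.lb b)).length),
    G.wout (onB b) (Fin.cast (by rw [map_lb b]) j) = onD (F.wout b j)
  eq_nIn : F.nIn = G.nIn
  eq_nOut : F.nOut = G.nOut
  map_pin : ∀ k, onD (F.pin k) = G.pin (Fin.cast eq_nIn k)
  map_pout : ∀ k, onD (F.pout k) = G.pout (Fin.cast eq_nOut k)

/-- Two dot-diagrams are isomorphic when there is a homomorphism between them which is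
bijective on boxes and on dots. -/
def Isomorphic (F G : DotDiagram σ) : Prop :=
  ∃ Φ : Hom F G, Function.Bijective Φ.onB ∧ Function.Bijective Φ.onD

end DotDiagram

/-- An interpretation of a signature over a commutative semiring `R`: a finite set for each
object label and a tensor of matrix entries for each morphism label. -/
structure Interp (σ : Signature) (R : Type) [CommSemiring R] where
  car : σ.Obj → Type
  finCar : ∀ A, Fintype (car A)
  val : (f : σ.Mor) →
    ((i : Fin (σ.dom f).length) → car ((σ.dom f).get i)) →
    ((j : Fin (σ.cod f).length) → car ((σ.cod f).get j)) → R

attribute [instance] Interp.finCar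

namespace Interp

variable {σ : Signature} {R : Type} [CommSemiring R]

/-- The tensor entry contributed by a box `b` under an assignment `φ` of dots. -/
def boxEntry (M : Interp σ R) (F : DotDiagram σ)
    (φ : (d : F.D) → M.car (F.ld d)) (b : F.B) : R :=
  M.val (F.lb b)
    (fun i => cast (congrArg M.car (F.tyIn b i)) (φ (F.win b i)))
    (fun j => cast (congrArg M.car (F.tyOut b j)) (φ (F.wout b j)))

/-- The scalar value of a closed dot-diagram: the sum over all assignments of elements to
dots of the product over boxes of the corresponding tensor entries. -/
noncomputable def value (M : Interp σ R) (F : DotDiagram σ) : R :=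
  ∑ φ : ((d : F.D) → M.car (F.ld d)), ∏ b : F.B, M.boxEntry F φ b

/-- The value matrix of a dot-diagram: the entry at a boundary assignment `(x; y)` is the
sum over all assignments of elements to dots compatible with the boundary of the product
over boxes of the corresponding tensor entries. -/
noncomputable def valueMatrix (M : Interp σ R) (F : DotDiagram σ)
    (x : Fin F.nIn → (Σ A : σ.Obj, M.car A))
    (y : Fin F.nOut → (Σ A : σ.Obj, M.car A)) : R :=
  ∑ φ : ((d : F.D) → M.car (F.ld d)),
    if (∀ k, (⟨F.ld (F.pin k), φ (F.pin k)⟩ : Σ A : σ.Obj, M.car A) = x k) ∧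
       (∀ l, (⟨F.ld (F.pout l), φ (F.pout l)⟩ : Σ A : σ.Obj, M.car A) = y l)
    then ∏ b : F.B, M.boxEntry F φ b else 0

end Interp

/-- A dagger signature: a signature together with an involution on morphism labels which
exchanges domains and codomains. -/
structure DaggerSignature extends Signature where
  dag : Mor → Mor
  dag_dag : ∀ f, dag (dag f) = f
  dom_dag : ∀ f, dom (dag f) = cod f
  cod_dag : ∀ f, cod (dag f) = dom f

/-- An interpretation of a dagger signature is a dagger interpretation (w.r.t. an
involution `conj` on the scalars) when the tensor interpreting `f†` is the
`conj`-conjugate transpose of the tensor interpreting `f`. -/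
def Interp.IsDagger {σ : DaggerSignature} {K : Type} [CommSemiring K]
    (M : Interp σ.toSignature K) (conj : K →+* K) : Prop :=
  ∀ (f : σ.Mor)
    (x : (i : Fin (σ.toSignature.dom f).length) → M.car ((σ.toSignature.dom f).get i))
    (y : (j : Fin (σ.toSignature.cod f).length) → M.car ((σ.toSignature.cod f).get j)),
    M.val (σ.dag f) (cast (by rw [σ.dom_dag]) y) (cast (by rw [σ.cod_dag]) x)
      = conj (M.val f x y)

/-- The dagger interpretation `⟦−⟧_F` over the involutive polynomial ring
`ℤ[X ∪ X̄]` (variables `X_b = X (inl b)` and `X̄_b = X (inr b)` for boxes `b` of `F`):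
an object label `A` is interpreted by the set of dots of `F` labelled `A`, and a morphism
label `f` by `Σ_{b ∈ ℓ_b⁻¹(f)} f_b + Σ_{b ∈ ℓ_b⁻¹(f†)} (f_b)†`, where `f_b` has entry
`X_b` at the wiring position of the box `b` and `0` elsewhere, and `(f_b)†` is its
transpose with `X_b` replaced by `X̄_b`. -/
noncomputable def DotDiagram.interpFdag {σ : DaggerSignature}
    (F : DotDiagram σ.toSignature) :
    Interp σ.toSignature (MvPolynomial (F.B ⊕ F.B) ℤ) where
  car A := {d : F.D // F.ld d = A}
  finCar A := Subtype.fintype _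
  val f xs ys :=
    (∑ b : F.B,
      if h : F.lb b = f then
        (if (∀ i, (xs i).1 = F.win b (Fin.cast (by rw [h]) i)) ∧
            (∀ j, (ys j).1 = F.wout b (Fin.cast (by rw [h]) j))
         then MvPolynomial.X (Sum.inl b) else 0)
      else 0)
    + (∑ b : F.B,
      if h : F.lb b = σ.dag f then
        (if (∀ i, (xs i).1 = F.wout b (Fin.cast (by rw [h, σ.cod_dag]) i)) ∧
            (∀ j, (ys j).1 = F.win b (Fin.cast (by rw [h, σ.dom_dag]) j))
         then MvPolynomial.X (Sum.inr b) else 0)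
      else 0)

namespace DotDiagram

variable {σ : DaggerSignature}

private lemma val_cast {F : DotDiagram σ.toSignature} {A A' : σ.toSignature.Obj} (h : A = A')
    (x : (F.interpFdag).car A) :
    (cast (congrArg (F.interpFdag).car h) x).1 = x.1 := by
  subst h; rfl

/-- The summand contributed by a choice `v : F.B ⊕ F.B` to a box entry. -/
noncomputable def Tfun (F G : DotDiagram σ.toSignature)
    (φ : (d : G.D) → (F.interpFdag).car (G.ld d)) (b : G.B) :
    F.B ⊕ F.B → MvPolynomial (F.B ⊕ F.B) ℤ
  | Sum.inl c =>
      if h : F.lb c = G.lb b then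
        (if (∀ i, (cast (congrArg (F.interpFdag).car (G.tyIn b i)) (φ (G.win b i))).1
                = F.win c (Fin.cast (by rw [h]) i)) ∧
            (∀ j, (cast (congrArg (F.interpFdag).car (G.tyOut b j)) (φ (G.wout b j))).1
                = F.wout c (Fin.cast (by rw [h]) j))
         then MvPolynomial.X (Sum.inl c) else 0)
      else 0
  | Sum.inr c =>
      if h : F.lb c = σ.dag (G.lb b) then
        (if (∀ i, (cast (congrArg (F.interpFdag).car (G.tyIn b i)) (φ (G.win b i))).1
                = F.wout c (Fin.cast (by rw [h, σ.cod_dag]) i)) ∧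
            (∀ j, (cast (congrArg (F.interpFdag).car (G.tyOut b j)) (φ (G.wout b j))).1
                = F.win c (Fin.cast (by rw [h, σ.dom_dag]) j))
         then MvPolynomial.X (Sum.inr c) else 0)
      else 0

private lemma boxEntry_eq_sum (F G : DotDiagram σ.toSignature)
    (φ : (d : G.D) → (F.interpFdag).car (G.ld d)) (b : G.B) :
    (F.interpFdag).boxEntry G φ b = ∑ v : F.B ⊕ F.B, Tfun F G φ b v := by
  rw [Fintype.sum_sum_type]
  rfl

private lemma Tfun_cases (F G : DotDiagram σ.toSignature)
    (φ : (d : G.D) → (F.interpFdag).car (G.ld d)) (b : G.B) (v : F.B ⊕ F.B) :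
    Tfun F G φ b v = MvPolynomial.X v ∨ Tfun F G φ b v = 0 := by
  cases v <;> (simp only [Tfun]; split_ifs <;> simp)

private lemma Tfun_inl_eq_X_iff (F G : DotDiagram σ.toSignature)
    (φ : (d : G.D) → (F.interpFdag).car (G.ld d)) (b : G.B) (c : F.B) :
    Tfun F G φ b (Sum.inl c) = MvPolynomial.X (Sum.inl c) ↔
      ∃ h : F.lb c = G.lb b,
        (∀ i, (φ (G.win b i)).1 = F.win c (Fin.cast (by rw [h]) i)) ∧
        (∀ j, (φ (G.wout b j)).1 = F.wout c (Fin.cast (by rw [h]) j)) := by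
  constructor
  · intro hT
    simp only [Tfun] at hT
    by_cases h : F.lb c = G.lb b
    · rw [dif_pos h] at hT
      split_ifs at hT with hc
      · exact ⟨h, fun i => (val_cast (G.tyIn b i) _).symm.trans (hc.1 i),
          fun j => (val_cast (G.tyOut b j) _).symm.trans (hc.2 j)⟩
      · exact absurd hT.symm (MvPolynomial.X_ne_zero _)
    · rw [dif_neg h] at hT
      exact absurd hT.symm (MvPolynomial.X_ne_zero _)
  · rintro ⟨h, h1, h2⟩
    simp only [Tfun]
    rw [dif_pos h, if_pos ⟨fun i => (val_cast (G.tyIn b i) _).trans (h1 i),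
      fun j => (val_cast (G.tyOut b j) _).trans (h2 j)⟩]

end DotDiagram

namespace DotDiagram

private lemma prodX {τ : Type} {ι : Type} [Fintype ι] (g : ι → τ) :
    (∏ b : ι, (MvPolynomial.X (g b) : MvPolynomial τ ℤ)) =
      MvPolynomial.monomial (∑ b : ι, Finsupp.single (g b) 1) 1 := by
  classical
  have : ∀ s : Finset ι, (∏ b ∈ s, (MvPolynomial.X (g b) : MvPolynomial τ ℤ)) =
      MvPolynomial.monomial (∑ b ∈ s, Finsupp.single (g b) 1) 1 := by
    intro s
    induction s using Finset.induction with
    | empty => simp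
    | insert _ _ hb ih =>
      rw [Finset.prod_insert hb, Finset.sum_insert hb, ih, MvPolynomial.X,
        MvPolynomial.monomial_mul, one_mul]
  exact this Finset.univ

private lemma sum_single_eq_iff {ι κ : Type} [Fintype ι] [Fintype κ]
    (g : ι → κ ⊕ κ) :
    (∑ b : ι, Finsupp.single (g b) (1 : ℕ)) = (∑ c : κ, Finsupp.single (Sum.inl c) 1) ↔
      ∃ ψ : ι → κ, Function.Bijective ψ ∧ g = Sum.inl ∘ ψ := by
  classical
  constructor
  · intro h
    have happ : ∀ v, (∑ b : ι, Finsupp.single (g b) (1 : ℕ)) v =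
        (Finset.univ.filter fun b => g b = v).card := by
      intro v
      rw [Finsupp.finset_sum_apply, Finset.card_filter]
      refine Finset.sum_congr rfl fun b _ => ?_
      rw [Finsupp.single_apply]
    have happ' : ∀ c : κ, (∑ c' : κ, Finsupp.single (Sum.inl c' : κ ⊕ κ) (1 : ℕ)) (Sum.inl c)
        = 1 := by
      intro c
      rw [Finsupp.finset_sum_apply]
      simp [Finsupp.single_apply]
    have happ'' : ∀ c : κ, (∑ c' : κ, Finsupp.single (Sum.inl c' : κ ⊕ κ) (1 : ℕ)) (Sum.inr c)
        = 0 := by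
      intro c
      rw [Finsupp.finset_sum_apply]
      simp [Finsupp.single_apply]
    have h1 : ∀ c, (Finset.univ.filter fun b => g b = Sum.inl c).card = 1 := by
      intro c
      rw [← happ, h, happ']
    have h2 : ∀ c, (Finset.univ.filter fun b => g b = Sum.inr c).card = 0 := by
      intro c
      rw [← happ, h, happ'']
    have hex : ∀ b, ∃ c, g b = Sum.inl c := by
      intro b
      cases hg : g b with
      | inl c => exact ⟨c, rfl⟩
      | inr c =>
        exfalso
        have : b ∈ Finset.univ.filter fun b => g b = Sum.inr c := by
          simp [hg]
        have hpos := Finset.card_pos.mpr ⟨b, this⟩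
        rw [h2 c] at hpos
        exact absurd hpos (lt_irrefl 0)
    choose ψ hψ using hex
    refine ⟨ψ, ⟨?_, ?_⟩, funext fun b => hψ b⟩
    · intro b1 b2 hb
      obtain ⟨a, ha⟩ := Finset.card_eq_one.mp (h1 (ψ b1))
      have m1 : b1 ∈ Finset.univ.filter fun b => g b = Sum.inl (ψ b1) := by simp [hψ]
      have m2 : b2 ∈ Finset.univ.filter fun b => g b = Sum.inl (ψ b1) := by
        simp [hψ, hb]
      rw [ha, Finset.mem_singleton] at m1 m2
      rw [m1, m2]
    · intro c
      have := h1 c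
      obtain ⟨a, ha⟩ := Finset.card_eq_one.mp this
      have : a ∈ Finset.univ.filter fun b => g b = Sum.inl c := ha ▸ Finset.mem_singleton_self a
      refine ⟨a, ?_⟩
      have := (Finset.mem_filter.mp this).2
      rw [hψ a] at this
      exact Sum.inl.injEq .. ▸ this
  · rintro ⟨ψ, hbij, rfl⟩
    exact Fintype.sum_bijective ψ hbij _ _ fun b => rfl

private theorem Hom.ext' {σ : Signature} {F G : DotDiagram σ} {Φ Ψ : Hom F G}
    (h1 : Φ.onB = Ψ.onB) (h2 : Φ.onD = Ψ.onD) : Φ = Ψ := by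
  cases Φ; cases Ψ
  cases h1; cases h2
  rfl

end DotDiagram

/-- The `magic coefficient' in the dagger case: for a dagger signature whose involution on
morphism labels is fixed-point-free and simple closed dot-diagrams `F` and `G`, the
coefficient of the monomial `∏_{b ∈ B^F} X_b` in `⟦G⟧_F ∈ ℤ[X ∪ X̄]` equals the number of
dot-diagram homomorphisms `G → F` whose box function is a bijection. -/
theorem DotDiagram.dagger_magic_coefficient {σ : DaggerSignature}
    (hfree : ∀ f : σ.Mor, σ.dag f ≠ f)
    (F G : DotDiagram σ.toSignature)
    (hFs : F.Simple) (hFc : F.Closed) (hGs : G.Simple) (hGc : G.Closed) :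
    MvPolynomial.coeff (∑ b : F.B, Finsupp.single (Sum.inl b) 1)
        (F.interpFdag.value G) =
      (Nat.card {Φ : DotDiagram.Hom G F // Function.Bijective Φ.onB} : ℤ) := by
  classical
  have hGin : G.nIn = 0 := hGc.1
  have hGout : G.nOut = 0 := hGc.2
  have hFin : F.nIn = 0 := hFc.1
  have hFout : F.nOut = 0 := hFc.2
  have hQ : ∀ (φ : (d : G.D) → (F.interpFdag).car (G.ld d)) (g : G.B → F.B ⊕ F.B),
      MvPolynomial.coeff (∑ b : F.B, Finsupp.single (Sum.inl b) 1)
        (∏ b : G.B, Tfun F G φ b (g b)) =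
      if (∀ b, Tfun F G φ b (g b) = MvPolynomial.X (g b)) ∧
         (∑ b : G.B, Finsupp.single (g b) 1) = (∑ b : F.B, Finsupp.single (Sum.inl b) 1)
      then 1 else 0 := by
    intro φ g
    by_cases hall : ∀ b, Tfun F G φ b (g b) = MvPolynomial.X (g b)
    · rw [Finset.prod_congr rfl fun b _ => hall b, prodX, MvPolynomial.coeff_monomial]
      by_cases hsum : (∑ b : G.B, Finsupp.single (g b) 1)
          = ∑ b : F.B, Finsupp.single (Sum.inl b) 1
      · rw [if_pos hsum, if_pos ⟨hall, hsum⟩]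
      · rw [if_neg hsum, if_neg (fun hc => hsum hc.2)]
    · obtain ⟨b, hb⟩ := not_forall.mp hall
      have hz : Tfun F G φ b (g b) = 0 := (Tfun_cases F G φ b (g b)).resolve_left hb
      rw [Finset.prod_eq_zero (Finset.mem_univ b) hz, MvPolynomial.coeff_zero,
        if_neg (fun hc => hb (hc.1 b))]
  have hval : MvPolynomial.coeff (∑ b : F.B, Finsupp.single (Sum.inl b) 1)
        (F.interpFdag.value G)
      = ∑ φ : (d : G.D) → (F.interpFdag).car (G.ld d), ∑ g : G.B → F.B ⊕ F.B,
          (if (∀ b, Tfun F G φ b (g b) = MvPolynomial.X (g b)) ∧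
              (∑ b : G.B, Finsupp.single (g b) 1)
                = (∑ b : F.B, Finsupp.single (Sum.inl b) 1)
           then (1 : ℤ) else 0) := by
    unfold Interp.value
    rw [MvPolynomial.coeff_sum]
    refine Finset.sum_congr rfl fun φ _ => ?_
    have hprod : (∏ b : G.B, (F.interpFdag).boxEntry G φ b)
        = ∑ g : G.B → F.B ⊕ F.B, ∏ b : G.B, Tfun F G φ b (g b) := by
      simp_rw [boxEntry_eq_sum F G φ]
      exact Fintype.prod_sum _
    rw [hprod, MvPolynomial.coeff_sum]
    exact Finset.sum_congr rfl fun g _ => hQ φ g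
  set P := ((d : G.D) → (F.interpFdag).car (G.ld d)) × (G.B → F.B ⊕ F.B) with hP
  set Qp : P → Prop := fun p =>
    (∀ b, Tfun F G p.1 b (p.2 b) = MvPolynomial.X (p.2 b)) ∧
      (∑ b : G.B, Finsupp.single (p.2 b) 1) = ∑ c : F.B, Finsupp.single (Sum.inl c) 1
    with hQp
  have key : Nat.card {p : P // Qp p}
      = Nat.card {Φ : DotDiagram.Hom G F // Function.Bijective Φ.onB} := by
    refine (Nat.card_congr (Equiv.ofBijective
      (fun Φ : {Φ : DotDiagram.Hom G F // Function.Bijective Φ.onB} =>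
        (⟨(fun d => ⟨Φ.1.onD d, Φ.1.map_ld d⟩, Sum.inl ∘ Φ.1.onB),
          fun b => (Tfun_inl_eq_X_iff F G _ b (Φ.1.onB b)).mpr
            ⟨Φ.1.map_lb b, fun i => (Φ.1.map_win b i).symm,
              fun j => (Φ.1.map_wout b j).symm⟩,
          (sum_single_eq_iff _).mpr ⟨Φ.1.onB, Φ.2, rfl⟩⟩ : {p : P // Qp p}))
      ⟨?_, ?_⟩)).symm
    · intro Φ1 Φ2 h
      have h' := congrArg Subtype.val h
      have hg := congrArg Prod.snd h'
      have hφ := congrArg Prod.fst h'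
      apply Subtype.ext
      apply Hom.ext'
      · exact funext fun b => Sum.inl_injective (congrFun hg b)
      · exact funext fun d => congrArg Subtype.val (congrFun hφ d)
    · rintro ⟨⟨φ, g⟩, hT, hmono⟩
      obtain ⟨ψ, hbij, hg⟩ := (sum_single_eq_iff g).mp hmono
      have key2 : ∀ b, ∃ h : F.lb (ψ b) = G.lb b,
          (∀ i, (φ (G.win b i)).1 = F.win (ψ b) (Fin.cast (by rw [h]) i)) ∧
          (∀ j, (φ (G.wout b j)).1 = F.wout (ψ b) (Fin.cast (by rw [h]) j)) := by
        intro b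
        have hTb := hT b
        rw [hg] at hTb
        exact (Tfun_inl_eq_X_iff F G φ b (ψ b)).mp hTb
      choose hlb hwin hwout using key2
      have hnin : G.nIn = F.nIn := by rw [hGin, hFin]
      have hnout : G.nOut = F.nOut := by rw [hGout, hFout]
      have hpin : ∀ k : Fin G.nIn,
          (fun d => (φ d).1) (G.pin k) = F.pin (Fin.cast hnin k) := by
        intro k
        exact absurd (lt_of_lt_of_eq k.2 hGin) (Nat.not_lt_zero _)
      have hpout : ∀ k : Fin G.nOut,
          (fun d => (φ d).1) (G.pout k) = F.pout (Fin.cast hnout k) := by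
        intro k
        exact absurd (lt_of_lt_of_eq k.2 hGout) (Nat.not_lt_zero _)
      refine ⟨⟨⟨ψ, fun d => (φ d).1, hlb, fun d => (φ d).2,
        fun b i => (hwin b i).symm, fun b j => (hwout b j).symm,
        hnin, hnout, hpin, hpout⟩, hbij⟩, ?_⟩
      apply Subtype.ext
      refine Prod.ext ?_ hg.symm
      funext d
      rfl
  calc MvPolynomial.coeff (∑ b : F.B, Finsupp.single (Sum.inl b) 1) (F.interpFdag.value G)
      = ∑ p : P, (if Qp p then (1 : ℤ) else 0) := by
        rw [hval]
        exact (Fintype.sum_prod_type (f := fun p : P => if Qp p then (1 : ℤ) else 0)).symm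
    _ = ((Finset.univ.filter Qp).card : ℤ) := Finset.sum_boole _ _
    _ = (Fintype.card {p : P // Qp p} : ℤ) := by rw [Fintype.card_subtype]
    _ = (Nat.card {p : P // Qp p} : ℤ) := by rw [Nat.card_eq_fintype_card]
    _ = (Nat.card {Φ : DotDiagram.Hom G F // Function.Bijective Φ.onB} : ℤ) := by rw [key]
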